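/- arXiv:1510.06896 — 3 statements merged into one kernel-verified Lean document; each statement's English description precedes it below -/
import Mathlib

section
/- With ⟨f⟩_k(u) = (1/2)·(f · ∂_x^k u + ∂_x^k(f·u)) on smooth functions, for smooth f, g: [⟨f⟩_2, ⟨g⟩_1] = -⟨f'·g'' + (1/2)·f·g'''⟩_0 + ⟨2·f·g' - f'·g⟩_2, as an identity of operators applied to every smooth u. -/
/-- The symmetrised operator `⟨f⟩ₖ u = (1/2)(f · ∂ₓᵏ u + ∂ₓᵏ(f·u))`. -/
noncomputable def ang (f : ℝ → ℝ) (k : ℕ) (u : ℝ → ℝ) : ℝ → ℝ :=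
  fun x => (1 / 2) * (f x * iteratedDeriv k u x + iteratedDeriv k (fun y => f y * u y) x)

private lemma Sd {h : ℝ → ℝ} (hh : ContDiff ℝ (⊤ : ℕ∞) h) : ContDiff ℝ (⊤ : ℕ∞) (deriv h) :=
  ((contDiff_succ_iff_deriv (n := (⊤ : ℕ∞))).mp (by rw [show ((⊤ : ℕ∞) : WithTop ℕ∞) + 1 = ((⊤ : ℕ∞) : WithTop ℕ∞) from rfl]; exact hh)).2.2

private lemma Dmul {f g : ℝ → ℝ} (hf : ContDiff ℝ (⊤ : ℕ∞) f) (hg : ContDiff ℝ (⊤ : ℕ∞) g) :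
    deriv (fun y => f y * g y) = fun y => deriv f y * g y + f y * deriv g y := by
  funext x
  exact deriv_fun_mul (hf.differentiable (by simp) x) (hg.differentiable (by simp) x)

private lemma Dadd {f g : ℝ → ℝ} (hf : ContDiff ℝ (⊤ : ℕ∞) f) (hg : ContDiff ℝ (⊤ : ℕ∞) g) :
    deriv (fun y => f y + g y) = fun y => deriv f y + deriv g y := by
  funext x
  exact deriv_fun_add (hf.differentiable (by simp) x) (hg.differentiable (by simp) x)

private lemma itd2 (h : ℝ → ℝ) : iteratedDeriv 2 h = deriv (deriv h) := by
  rw [iteratedDeriv_succ, iteratedDeriv_one]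

private lemma itd3 (h : ℝ → ℝ) : iteratedDeriv 3 h = deriv (deriv (deriv h)) := by
  rw [iteratedDeriv_succ, itd2]

private lemma ang1_eq {g u : ℝ → ℝ} (hg : ContDiff ℝ (⊤ : ℕ∞) g) (hu : ContDiff ℝ (⊤ : ℕ∞) u) :
    ang g 1 u = fun x => g x * deriv u x + (1/2) * deriv g x * u x := by
  funext x
  simp only [ang, iteratedDeriv_one, Dmul hg hu]
  ring

private lemma ang2_eq {f u : ℝ → ℝ} (hf : ContDiff ℝ (⊤ : ℕ∞) f) (hu : ContDiff ℝ (⊤ : ℕ∞) u) :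
    ang f 2 u = fun x =>
      f x * deriv (deriv u) x + deriv f x * deriv u x + (1/2) * deriv (deriv f) x * u x := by
  funext x
  simp only [ang, itd2, Dmul hf hu, Dadd (Sd hf |>.mul hu) (hf.mul (Sd hu)),
    Dmul (Sd hf) hu, Dmul hf (Sd hu)]
  ring

private lemma dAt {h : ℝ → ℝ} (hh : ContDiff ℝ (⊤ : ℕ∞) h) (y : ℝ) : DifferentiableAt ℝ h y :=
  hh.differentiable (by simp) y

theorem stmt_11 (f g u : ℝ → ℝ)
    (hf : ContDiff ℝ (⊤ : ℕ∞) f) (hg : ContDiff ℝ (⊤ : ℕ∞) g) (hu : ContDiff ℝ (⊤ : ℕ∞) u) :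
    ang f 2 (ang g 1 u) - ang g 1 (ang f 2 u)
      = -(ang (fun x => deriv f x * iteratedDeriv 2 g x + (1 / 2) * f x * iteratedDeriv 3 g x) 0 u)
        + ang (fun x => 2 * f x * deriv g x - deriv f x * g x) 2 u := by
  have hf1 := Sd hf; have hf2 := Sd hf1; have hf3 := Sd hf2
  have hg1 := Sd hg; have hg2 := Sd hg1; have hg3 := Sd hg2
  have hu1 := Sd hu; have hu2 := Sd hu1; have hu3 := Sd hu2
  have hv : ContDiff ℝ (⊤ : ℕ∞) (fun x => g x * deriv u x + 1 / 2 * deriv g x * u x) :=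
    (hg.mul hu1).add ((contDiff_const.mul hg1).mul hu)
  have hw : ContDiff ℝ (⊤ : ℕ∞) (fun x =>
      f x * deriv (deriv u) x + deriv f x * deriv u x + 1 / 2 * deriv (deriv f) x * u x) :=
    ((hf.mul hu2).add (hf1.mul hu1)).add ((contDiff_const.mul hf2).mul hu)
  have hphi : ContDiff ℝ (⊤ : ℕ∞) (fun x => 2 * f x * deriv g x - deriv f x * g x) :=
    ((contDiff_const.mul hf).mul hg1).sub (hf1.mul hg)
  have e1 : deriv (fun x => g x * deriv u x + 1 / 2 * deriv g x * u x)
      = fun x => 3 / 2 * deriv g x * deriv u x + g x * deriv (deriv u) x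
          + 1 / 2 * deriv (deriv g) x * u x := by
    funext y
    rw [deriv_fun_add (dAt (hg.mul hu1) y) (dAt ((contDiff_const.mul hg1).mul hu) y),
        deriv_fun_mul (dAt hg y) (dAt hu1 y),
        deriv_fun_mul (dAt (contDiff_const.mul hg1) y) (dAt hu y),
        deriv_const_mul _ (dAt hg1 y)]
    ring
  have e2 : deriv (fun x => 3 / 2 * deriv g x * deriv u x + g x * deriv (deriv u) x
          + 1 / 2 * deriv (deriv g) x * u x)
      = fun x => g x * deriv (deriv (deriv u)) x + 5 / 2 * deriv g x * deriv (deriv u) x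
          + 2 * deriv (deriv g) x * deriv u x + 1 / 2 * deriv (deriv (deriv g)) x * u x := by
    funext y
    rw [deriv_fun_add (dAt (((contDiff_const.mul hg1).mul hu1).add (hg.mul hu2)) y)
          (dAt ((contDiff_const.mul hg2).mul hu) y),
        deriv_fun_add (dAt ((contDiff_const.mul hg1).mul hu1) y) (dAt (hg.mul hu2) y),
        deriv_fun_mul (dAt (contDiff_const.mul hg1) y) (dAt hu1 y),
        deriv_const_mul _ (dAt hg1 y),
        deriv_fun_mul (dAt hg y) (dAt hu2 y),
        deriv_fun_mul (dAt (contDiff_const.mul hg2) y) (dAt hu y),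
        deriv_const_mul _ (dAt hg2 y)]
    ring
  have e3 : deriv (fun x =>
        f x * deriv (deriv u) x + deriv f x * deriv u x + 1 / 2 * deriv (deriv f) x * u x)
      = fun x => f x * deriv (deriv (deriv u)) x + 2 * deriv f x * deriv (deriv u) x
          + 3 / 2 * deriv (deriv f) x * deriv u x + 1 / 2 * deriv (deriv (deriv f)) x * u x := by
    funext y
    rw [deriv_fun_add (dAt ((hf.mul hu2).add (hf1.mul hu1)) y)
          (dAt ((contDiff_const.mul hf2).mul hu) y),
        deriv_fun_add (dAt (hf.mul hu2) y) (dAt (hf1.mul hu1) y),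
        deriv_fun_mul (dAt hf y) (dAt hu2 y),
        deriv_fun_mul (dAt hf1 y) (dAt hu1 y),
        deriv_fun_mul (dAt (contDiff_const.mul hf2) y) (dAt hu y),
        deriv_const_mul _ (dAt hf2 y)]
    ring
  have e4 : deriv (fun x => 2 * f x * deriv g x - deriv f x * g x)
      = fun x => deriv f x * deriv g x + 2 * f x * deriv (deriv g) x
          - deriv (deriv f) x * g x := by
    funext y
    rw [deriv_fun_sub (dAt ((contDiff_const.mul hf).mul hg1) y) (dAt (hf1.mul hg) y),
        deriv_fun_mul (dAt (contDiff_const.mul hf) y) (dAt hg1 y),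
        deriv_const_mul _ (dAt hf y),
        deriv_fun_mul (dAt hf1 y) (dAt hg y)]
    ring
  have e5 : deriv (fun x => deriv f x * deriv g x + 2 * f x * deriv (deriv g) x
          - deriv (deriv f) x * g x)
      = fun x => 3 * deriv f x * deriv (deriv g) x + 2 * f x * deriv (deriv (deriv g)) x
          - deriv (deriv (deriv f)) x * g x := by
    funext y
    rw [deriv_fun_sub (dAt ((hf1.mul hg1).add ((contDiff_const.mul hf).mul hg2)) y)
          (dAt (hf2.mul hg) y),
        deriv_fun_add (dAt (hf1.mul hg1) y) (dAt ((contDiff_const.mul hf).mul hg2) y),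
        deriv_fun_mul (dAt hf1 y) (dAt hg1 y),
        deriv_fun_mul (dAt (contDiff_const.mul hf) y) (dAt hg2 y),
        deriv_const_mul _ (dAt hf y),
        deriv_fun_mul (dAt hf2 y) (dAt hg y)]
    ring
  rw [ang1_eq hg hu, ang2_eq hf hv, ang2_eq hf hu, ang1_eq hg hw,
      ang2_eq hphi hu, e1, e2, e3, e4, e5]
  funext x
  simp only [Pi.add_apply, Pi.sub_apply, Pi.neg_apply, ang, iteratedDeriv_zero, itd2, itd3]
  ring
end

section
/- Consider 2n×2n real matrices in block form. Let C = { a·I_{2n} + [[0, A],[0, 0]] : a ∈ ℝ, A an n×n real matrix } (i.e. block upper triangular with both diagonal blocks equal to a·I_n and arbitrary upper-right block). Then C is a commutative subalgebra of M_{2n}(ℝ), and every block upper triangular matrix d = [[E11, E12],[0, E22]] satisfies [d, x] ∈ C for all x ∈ C, i.e. d lies in the Lie idealiser of C. -/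
open Matrix

theorem stmt_16 (n : ℕ) :
    let C : Set (Matrix (Fin n ⊕ Fin n) (Fin n ⊕ Fin n) ℝ) :=
      {M | ∃ (a : ℝ) (A : Matrix (Fin n) (Fin n) ℝ),
        M = fromBlocks (a • (1 : Matrix (Fin n) (Fin n) ℝ)) A 0 (a • 1)}
    (1 : Matrix (Fin n ⊕ Fin n) (Fin n ⊕ Fin n) ℝ) ∈ C ∧
    (∀ x ∈ C, ∀ y ∈ C, x + y ∈ C) ∧
    (∀ (r : ℝ), ∀ x ∈ C, r • x ∈ C) ∧
    (∀ x ∈ C, ∀ y ∈ C, x * y ∈ C) ∧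
    (∀ x ∈ C, ∀ y ∈ C, x * y = y * x) ∧
    (∀ (E11 E12 E22 : Matrix (Fin n) (Fin n) ℝ), ∀ x ∈ C,
      (fromBlocks E11 E12 0 E22) * x - x * (fromBlocks E11 E12 0 E22) ∈ C) := by
  intro C
  refine ⟨⟨1, 0, by simp [fromBlocks_one]⟩, ?_, ?_, ?_, ?_, ?_⟩
  · rintro x ⟨a, A, rfl⟩ y ⟨b, B, rfl⟩
    exact ⟨a + b, A + B, by simp [fromBlocks_add, add_smul]⟩
  · rintro r x ⟨a, A, rfl⟩
    exact ⟨r * a, r • A, by simp [Matrix.fromBlocks_smul, smul_smul]⟩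
  · rintro x ⟨a, A, rfl⟩ y ⟨b, B, rfl⟩
    refine ⟨a * b, a • B + b • A, ?_⟩
    simp [fromBlocks_multiply, smul_smul, Matrix.smul_mul, Matrix.mul_smul,
      mul_comm, add_comm]
  · rintro x ⟨a, A, rfl⟩ y ⟨b, B, rfl⟩
    simp [fromBlocks_multiply, smul_smul, Matrix.smul_mul, Matrix.mul_smul,
      mul_comm, add_comm]
  · rintro E11 E12 E22 x ⟨a, A, rfl⟩
    refine ⟨0, E11 * A - A * E22, ?_⟩
    simp only [fromBlocks_multiply, Matrix.smul_mul, Matrix.mul_smul, Matrix.zero_mul,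
      Matrix.mul_zero, Matrix.mul_one, Matrix.one_mul, add_zero, zero_add, smul_zero,
      sub_eq_iff_eq_add]
    rw [fromBlocks_add]
    simp
end

section
/- For every integer n ≥ 1, the quantity C_1(n) = 4 + 2·∑_{k=2}^{n} 4(k-1)·⌈(2n+2)/(2k-2)⌉ + 4n·⌈(2n+2)/(2n)⌉ satisfies C_1(n) ≤ 12n² + 4n − 4. -/
theorem Int.mul_ceil_div_le_add_sub_one {α : Type*} [Field α] [LinearOrder α] [IsStrictOrderedRing α]
    [FloorRing α] (a d : ℤ) (hd : 0 < d) : d * ⌈(a : α) / d⌉ ≤ a + d - 1 := by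
  have hd' : (0 : α) < d := by exact_mod_cast hd
  have h : (d : α) * ⌈(a : α) / d⌉ < a + d := by
    calc (d : α) * ⌈(a : α) / d⌉ < d * ((a : α) / d + 1) :=
          mul_lt_mul_of_pos_left (Int.ceil_lt_add_one _) hd'
      _ = a + d := by field_simp
  have : d * ⌈(a : α) / d⌉ < a + d := by exact_mod_cast h
  omega

lemma sub_one_mul_ceil_le (n k : ℕ) (hk : 2 ≤ k) :
    ((k : ℤ) - 1) * ⌈(2 * (n : ℚ) + 2) / (2 * k - 2)⌉ ≤ n + k - 1 := by
  have h := Int.mul_ceil_div_le_add_sub_one (α := ℚ) (2 * n + 2) (2 * k - 2) (by omega)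
  push_cast at h
  rw [show ((2 : ℤ) * k - 2) = 2 * (k - 1) by ring, mul_assoc] at h
  -- the left side of `h` is even, so the odd bound `2n + 2k - 1` drops to `2n + 2k - 2`
  omega

lemma sum_Icc_two_add_sub_one (n : ℕ) :
    ∑ k ∈ Finset.Icc 2 n, ((n : ℤ) + k - 1) * 2 = 3 * n * (n - 1) := by
  induction n with
  | zero => simp
  | succ m ih =>
    rcases Nat.eq_zero_or_pos m with rfl | hm
    · simp
    rw [Finset.sum_Icc_succ_top (by omega), Finset.sum_congr rfl
      (g := fun k : ℕ => ((m : ℤ) + k - 1) * 2 + 2) (fun k _ => by push_cast; ring),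
      Finset.sum_add_distrib, ih, Finset.sum_const, Nat.card_Icc, nsmul_eq_mul]
    push_cast [show m + 1 - 2 = m - 1 by omega, Nat.cast_sub hm]
    ring

lemma ceil_add_one_div_self_le_two (n : ℕ) (hn : 1 ≤ n) :
    ⌈(2 * (n : ℚ) + 2) / (2 * n)⌉ ≤ 2 := by
  have hn' : (1 : ℚ) ≤ n := by exact_mod_cast hn
  rw [Int.ceil_le, div_le_iff₀ (by positivity)]
  push_cast
  linarith

theorem stmt_18 (n : ℕ) (hn : 1 ≤ n) :
    (4 : ℤ) + 2 * ∑ k ∈ Finset.Icc 2 n, 4 * ((k : ℤ) - 1) * ⌈(2 * (n : ℚ) + 2) / (2 * k - 2)⌉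
        + 4 * n * ⌈(2 * (n : ℚ) + 2) / (2 * n)⌉
      ≤ 12 * (n : ℤ) ^ 2 + 4 * n - 4 := by
  have hsum : 2 * ∑ k ∈ Finset.Icc 2 n, 4 * ((k : ℤ) - 1) * ⌈(2 * (n : ℚ) + 2) / (2 * k - 2)⌉
      ≤ 12 * n * (n - 1) := by
    calc 2 * ∑ k ∈ Finset.Icc 2 n, 4 * ((k : ℤ) - 1) * ⌈(2 * (n : ℚ) + 2) / (2 * k - 2)⌉
        ≤ 4 * ∑ k ∈ Finset.Icc 2 n, ((n : ℤ) + k - 1) * 2 := by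
          rw [Finset.mul_sum, Finset.mul_sum]
          refine Finset.sum_le_sum fun k hk => ?_
          have := sub_one_mul_ceil_le n k (Finset.mem_Icc.mp hk).1
          linarith
      _ = 12 * n * (n - 1) := by rw [sum_Icc_two_add_sub_one]; ring
  have hlast := ceil_add_one_div_self_le_two n hn
  have hn' : (1 : ℤ) ≤ n := by exact_mod_cast hn
  nlinarith
end
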